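/- Suppose ε, β, γ, ρ, I₀ with ε, β, γ > 0 and I₀ ≤ β/γ satisfy Condition C2. Then for each α ∈ [0,1] the algebraic system 0 = (1 − ρ²/2)X̃₂(α) − X̃₂(α)³/3 − Ỹ₂(α) + αI₀, 0 = X̃₂(α) − γỸ₂(α) + β has a unique solution (X̃₂(α), Ỹ₂(α)), and the following hold: (i) X̃₂(α)² > 1 − ρ²/2 for every α ∈ [0,1]; (ii) the functions α ↦ X̃₂(α) and α ↦ Ỹ₂(α) are continuous on [0,1] and differentiable on (0,1) (with one-sided derivatives at α = 0 and α = 1); (iii) on (0,1) the derivatives satisfy X̃₂′(α) = I₀/(X̃₂(α)² − 1 + 1/γ + ρ²/2) and Ỹ₂′(α) = (1/γ)·X̃₂′(α), with X̃₂(α)² − 1 + ρ²/2 + 1/γ > 1/γ > 0 for all α ∈ [0,1]. -/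

import Mathlib

/-!
Eliminating `Y = (X + β) / γ` leaves one cubic equation for `X`; subtracting it at two parameters
gives `(X α - X α₀) * q = (α - α₀) * I₀` with `q = (X α² + X α X α₀ + X α₀²)/3 - (1 - ρ²/2) + 1/γ`.
Condition C2 gives `X² > 1 - ρ²/2`, and `I₀ ≤ β / γ` makes the cubic nonpositive at `0`, so its
unique root is `≤ 0` (it tends to `+∞` at `-∞`). Hence `X α X α₀ ≥ 0`, so `q > 1/γ`: `X` is
Lipschitz, and the difference quotients `I₀ / q` converge to `I₀ / (X α₀² - 1 + ρ²/2 + 1/γ)`.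
-/

open Set Filter Topology

/-- Condition C2: for every `σ ∈ [0,1]` the system
`v' = (1 − ρ²/2)v − v³/3 − w + σI₀`, `w' = ε(v − γw + β)` has a unique equilibrium,
this equilibrium is stable (negative trace and positive determinant of the
linearization `[[1 − ρ²/2 − v₀², −1],[ε, −εγ]]`), and there is `c > 0` with
`v₀(σ)² − 1 + ρ²/2 > c` uniformly in `σ`. -/
def CondC2 (ε β γ ρ I₀ : ℝ) : Prop :=
  (∀ σ ∈ Icc (0:ℝ) 1, ∃! p : ℝ × ℝ,
    (1 - ρ ^ 2 / 2) * p.1 - p.1 ^ 3 / 3 - p.2 + σ * I₀ = 0 ∧ p.1 - γ * p.2 + β = 0) ∧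
  (∀ σ ∈ Icc (0:ℝ) 1, ∀ p : ℝ × ℝ,
    ((1 - ρ ^ 2 / 2) * p.1 - p.1 ^ 3 / 3 - p.2 + σ * I₀ = 0 ∧ p.1 - γ * p.2 + β = 0) →
    (1 - ρ ^ 2 / 2 - p.1 ^ 2) - ε * γ < 0 ∧
    (1 - ρ ^ 2 / 2 - p.1 ^ 2) * (-(ε * γ)) + ε > 0) ∧
  (∃ c > (0:ℝ), ∀ σ ∈ Icc (0:ℝ) 1, ∀ p : ℝ × ℝ,
    ((1 - ρ ^ 2 / 2) * p.1 - p.1 ^ 3 / 3 - p.2 + σ * I₀ = 0 ∧ p.1 - γ * p.2 + β = 0) →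
    p.1 ^ 2 - 1 + ρ ^ 2 / 2 > c)

theorem hasDerivWithinAt_of_sub_mul_eq {f q : ℝ → ℝ} {s : Set ℝ} {x₀ c q₀ : ℝ}
    (hfq : ∀ x ∈ s, (f x - f x₀) * q x = (x - x₀) * c) (hq : ∀ x ∈ s, q x ≠ 0)
    (hlim : Tendsto q (𝓝[s] x₀) (𝓝 q₀)) (hq₀ : q₀ ≠ 0) :
    HasDerivWithinAt f (c / q₀) s x₀ := by
  rw [hasDerivWithinAt_iff_tendsto_slope]
  have : Tendsto (fun x ↦ c / q x) (𝓝[s] x₀) (𝓝 (c / q₀)) := tendsto_const_nhds.div hlim hq₀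
  refine (this.mono_left (nhdsWithin_mono _ sdiff_subset)).congr' ?_
  filter_upwards [self_mem_nhdsWithin] with x ⟨hxs, hx₀⟩
  rw [slope_def_field, div_eq_div_iff (hq x hxs) (sub_ne_zero.2 hx₀), hfq x hxs, mul_comm]

theorem exists_cubic_root_le {a b x₀ : ℝ} (h : -x₀ ^ 3 / 3 + a * x₀ + b ≤ 0) :
    ∃ x ≤ x₀, -x ^ 3 / 3 + a * x + b = 0 := by
  -- `t` dominates `a` and `-b`, and `t³/3 ≥ t² + t` once `t ≥ 4`
  set t := |a| + |b| + |x₀| + 4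
  have ha : a ≤ t := by linarith [le_abs_self a, abs_nonneg b, abs_nonneg x₀]
  have hb : -b ≤ t := by linarith [neg_abs_le b, abs_nonneg a, abs_nonneg x₀]
  have ht : 4 ≤ t := by linarith [abs_nonneg a, abs_nonneg b, abs_nonneg x₀]
  have hpos : 0 ≤ -(-t) ^ 3 / 3 + a * -t + b := by
    nlinarith [mul_le_mul_of_nonneg_right ha (by linarith : (0:ℝ) ≤ t),
      mul_le_mul_of_nonneg_left ht (by nlinarith : (0:ℝ) ≤ t * t)]
  have hle : -t ≤ x₀ := by linarith [neg_abs_le x₀, abs_nonneg a, abs_nonneg b]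
  obtain ⟨x, hx, hx0⟩ := intermediate_value_Icc' hle
    (by fun_prop : Continuous fun x : ℝ ↦ -x ^ 3 / 3 + a * x + b).continuousOn ⟨h, hpos⟩
  exact ⟨x, hx.2, hx0⟩

theorem three_mul_lt_sq_add_mul_add_sq {x y L : ℝ} (hxy : 0 ≤ x * y) (hx : L < x ^ 2)
    (hy : L < y ^ 2) : 3 * L < x ^ 2 + x * y + y ^ 2 := by
  rcases le_or_gt L 0 with hL | hL
  · nlinarith
  · have : L < x * y := by nlinarith
    linarith

def IsEquilibrium (ρ γ β s : ℝ) (p : ℝ × ℝ) : Prop :=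
  (1 - ρ ^ 2 / 2) * p.1 - p.1 ^ 3 / 3 - p.2 + s = 0 ∧ p.1 - γ * p.2 + β = 0

namespace IsEquilibrium

variable {ρ γ β s t : ℝ} {p q : ℝ × ℝ}

theorem snd_eq (hp : IsEquilibrium ρ γ β s p) (hγ : γ ≠ 0) : p.2 = (p.1 + β) / γ := by
  rw [eq_div_iff hγ]
  linarith [hp.2]

theorem fst_sub_mul_eq (hp : IsEquilibrium ρ γ β s p) (hq : IsEquilibrium ρ γ β t q)
    (hγ : γ ≠ 0) :
    (p.1 - q.1) * ((p.1 ^ 2 + p.1 * q.1 + q.1 ^ 2) / 3 - (1 - ρ ^ 2 / 2) + 1 / γ) = s - t := by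
  have hd : (p.1 - q.1) / γ = p.2 - q.2 := by
    rw [hp.snd_eq hγ, hq.snd_eq hγ]
    ring
  linear_combination -hp.1 + hq.1 + hd

end IsEquilibrium

theorem exists_isEquilibrium_fst_nonpos {ρ γ β s : ℝ} (hγ : 0 < γ) (hs : s ≤ β / γ) :
    ∃ p, IsEquilibrium ρ γ β s p ∧ p.1 ≤ 0 := by
  obtain ⟨x, hx, hroot⟩ := exists_cubic_root_le (a := 1 - ρ ^ 2 / 2 - 1 / γ) (b := s - β / γ)
    (x₀ := 0) (by linarith)
  refine ⟨(x, (x + β) / γ), ⟨?_, ?_⟩, hx⟩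
  · linear_combination hroot
  · field_simp
    ring

theorem IsEquilibrium.fst_nonpos {ρ γ β s : ℝ} {p : ℝ × ℝ} (hp : IsEquilibrium ρ γ β s p)
    (huniq : ∃! p, IsEquilibrium ρ γ β s p) (hγ : 0 < γ) (hs : s ≤ β / γ) : p.1 ≤ 0 := by
  obtain ⟨q, hq, hq₁⟩ := exists_isEquilibrium_fst_nonpos hγ hs
  rwa [huniq.unique hp hq]

section EquilibriumCurve

variable {ρ γ β I₀ : ℝ} {S : Set ℝ} {X Y : ℝ → ℝ}

theorem lipschitzOnWith_fst_of_isEquilibrium (hγ : 0 < γ)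
    (hXY : ∀ α ∈ S, IsEquilibrium ρ γ β (α * I₀) (X α, Y α))
    (hneg : ∀ α ∈ S, X α ≤ 0) (hsq : ∀ α ∈ S, 1 - ρ ^ 2 / 2 < X α ^ 2) :
    LipschitzOnWith (γ * |I₀|).toNNReal X S := by
  refine LipschitzOnWith.of_dist_le' fun α hα α₀ hα₀ ↦ ?_
  have hid := (hXY α hα).fst_sub_mul_eq (hXY α₀ hα₀) hγ.ne'
  have hq : 1 / γ < (X α ^ 2 + X α * X α₀ + X α₀ ^ 2) / 3 - (1 - ρ ^ 2 / 2) + 1 / γ := by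
    linarith [three_mul_lt_sq_add_mul_add_sq
      (mul_nonneg_of_nonpos_of_nonpos (hneg α hα) (hneg α₀ hα₀)) (hsq α hα) (hsq α₀ hα₀)]
  set q := (X α ^ 2 + X α * X α₀ + X α₀ ^ 2) / 3 - (1 - ρ ^ 2 / 2) + 1 / γ
  have hγq : 1 ≤ γ * q := by rw [← div_le_iff₀' hγ]; exact hq.le
  have hq₀ : 0 < q := lt_trans (by positivity) hq
  calc dist (X α) (X α₀) ≤ γ * q * |X α - X α₀| := le_mul_of_one_le_left (abs_nonneg _) hγq
    _ = γ * |(X α - X α₀) * q| := by rw [abs_mul, abs_of_pos hq₀]; ring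
    _ = γ * |I₀| * dist α α₀ := by simp only [hid, Real.dist_eq, ← sub_mul, abs_mul]; ring

theorem hasDerivWithinAt_fst_of_isEquilibrium (hγ : 0 < γ)
    (hXY : ∀ α ∈ S, IsEquilibrium ρ γ β (α * I₀) (X α, Y α))
    (hneg : ∀ α ∈ S, X α ≤ 0) (hsq : ∀ α ∈ S, 1 - ρ ^ 2 / 2 < X α ^ 2)
    {α₀ : ℝ} (hα₀ : α₀ ∈ S) :
    HasDerivWithinAt X (I₀ / (X α₀ ^ 2 - 1 + 1 / γ + ρ ^ 2 / 2)) S α₀ := by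
  have hX : ContinuousWithinAt X S α₀ :=
    (lipschitzOnWith_fst_of_isEquilibrium hγ hXY hneg hsq).continuousOn α₀ hα₀
  have hγ' : 0 < 1 / γ := by positivity
  apply hasDerivWithinAt_of_sub_mul_eq
    (q := fun α ↦ (X α ^ 2 + X α * X α₀ + X α₀ ^ 2) / 3 - (1 - ρ ^ 2 / 2) + 1 / γ)
  · intro α hα
    rw [(hXY α hα).fst_sub_mul_eq (hXY α₀ hα₀) hγ.ne']
    ring
  · intro α hα
    have := three_mul_lt_sq_add_mul_add_sq
      (mul_nonneg_of_nonpos_of_nonpos (hneg α hα) (hneg α₀ hα₀)) (hsq α hα) (hsq α₀ hα₀)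
    linarith
  · convert (show ContinuousWithinAt (fun α ↦ (X α ^ 2 + X α * X α₀ + X α₀ ^ 2) / 3
      - (1 - ρ ^ 2 / 2) + 1 / γ) S α₀ by fun_prop).tendsto using 2
    ring
  · linarith [hsq α₀ hα₀]

theorem hasDerivWithinAt_snd_of_isEquilibrium (hγ : γ ≠ 0)
    (hXY : ∀ α ∈ S, IsEquilibrium ρ γ β (α * I₀) (X α, Y α)) {α₀ X' : ℝ} (hα₀ : α₀ ∈ S)
    (hX : HasDerivWithinAt X X' S α₀) : HasDerivWithinAt Y (X' / γ) S α₀ :=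
  ((hX.add_const β).div_const γ).congr (fun α hα ↦ (hXY α hα).snd_eq hγ)
    ((hXY α₀ hα₀).snd_eq hγ)

end EquilibriumCurve

theorem stmt_7_general (ε β γ ρ I₀ : ℝ) (hβ : 0 < β) (hγ : 0 < γ)
    (hI₀ : I₀ ≤ β / γ) (hC2 : CondC2 ε β γ ρ I₀) :
    (∀ α ∈ Icc (0:ℝ) 1, ∃! p : ℝ × ℝ,
      (1 - ρ ^ 2 / 2) * p.1 - p.1 ^ 3 / 3 - p.2 + α * I₀ = 0 ∧ p.1 - γ * p.2 + β = 0) ∧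
    ∀ X Y : ℝ → ℝ,
      (∀ α ∈ Icc (0:ℝ) 1,
        (1 - ρ ^ 2 / 2) * X α - X α ^ 3 / 3 - Y α + α * I₀ = 0 ∧ X α - γ * Y α + β = 0) →
      (∀ α ∈ Icc (0:ℝ) 1, X α ^ 2 > 1 - ρ ^ 2 / 2) ∧
      ContinuousOn X (Icc 0 1) ∧ ContinuousOn Y (Icc 0 1) ∧
      (∀ α ∈ Icc (0:ℝ) 1, DifferentiableWithinAt ℝ X (Icc (0:ℝ) 1) α ∧
        DifferentiableWithinAt ℝ Y (Icc (0:ℝ) 1) α) ∧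
      (∀ α ∈ Ioo (0:ℝ) 1, ∃ dX dY : ℝ, HasDerivAt X dX α ∧ HasDerivAt Y dY α ∧
        dX = I₀ / (X α ^ 2 - 1 + 1 / γ + ρ ^ 2 / 2) ∧
        dY = (1 / γ) * dX) ∧
      (∀ α ∈ Icc (0:ℝ) 1, X α ^ 2 - 1 + ρ ^ 2 / 2 + 1 / γ > 1 / γ ∧ (0:ℝ) < 1 / γ) := by
  obtain ⟨huniq, -, c, hc, hgap⟩ := hC2
  refine ⟨huniq, fun X Y hXY ↦ ?_⟩
  have hXY' : ∀ α ∈ Icc (0:ℝ) 1, IsEquilibrium ρ γ β (α * I₀) (X α, Y α) := hXY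
  have hsq (α) (hα : α ∈ Icc (0:ℝ) 1) : 1 - ρ ^ 2 / 2 < X α ^ 2 := by
    linarith [hgap α hα (X α, Y α) (hXY α hα)]
  have hneg (α) (hα : α ∈ Icc (0:ℝ) 1) : X α ≤ 0 := by
    have hβγ : 0 < β / γ := by positivity
    refine (hXY' α hα).fst_nonpos (huniq α hα) hγ ?_
    nlinarith [hα.1, hα.2]
  have hX (α) (hα : α ∈ Icc (0:ℝ) 1) :=
    hasDerivWithinAt_fst_of_isEquilibrium hγ hXY' hneg hsq hα
  have hY (α) (hα : α ∈ Icc (0:ℝ) 1) :=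
    hasDerivWithinAt_snd_of_isEquilibrium hγ.ne' hXY' hα (hX α hα)
  refine ⟨hsq, fun α hα ↦ (hX α hα).continuousWithinAt,
    fun α hα ↦ (hY α hα).continuousWithinAt,
    fun α hα ↦ ⟨(hX α hα).differentiableWithinAt, (hY α hα).differentiableWithinAt⟩,
    fun α hα ↦ ?_, fun α hα ↦ ⟨by linarith [hsq α hα], by positivity⟩⟩
  have hIcc : Icc (0:ℝ) 1 ∈ 𝓝 α := Icc_mem_nhds hα.1 hα.2
  exact ⟨_, _, (hX α (Ioo_subset_Icc_self hα)).hasDerivAt hIcc,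
    (hY α (Ioo_subset_Icc_self hα)).hasDerivAt hIcc, rfl, by ring⟩

/-- **Lemma (Properties of the algebraic system, steering problem 2).** -/
theorem stmt_7 (ε β γ ρ I₀ : ℝ) (hε : 0 < ε) (hβ : 0 < β) (hγ : 0 < γ)
    (hI₀ : I₀ ≤ β / γ) (hC2 : CondC2 ε β γ ρ I₀) :
    (∀ α ∈ Icc (0:ℝ) 1, ∃! p : ℝ × ℝ,
      (1 - ρ ^ 2 / 2) * p.1 - p.1 ^ 3 / 3 - p.2 + α * I₀ = 0 ∧ p.1 - γ * p.2 + β = 0) ∧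
    ∀ X Y : ℝ → ℝ,
      (∀ α ∈ Icc (0:ℝ) 1,
        (1 - ρ ^ 2 / 2) * X α - X α ^ 3 / 3 - Y α + α * I₀ = 0 ∧ X α - γ * Y α + β = 0) →
      (∀ α ∈ Icc (0:ℝ) 1, X α ^ 2 > 1 - ρ ^ 2 / 2) ∧
      ContinuousOn X (Icc 0 1) ∧ ContinuousOn Y (Icc 0 1) ∧
      (∀ α ∈ Icc (0:ℝ) 1, DifferentiableWithinAt ℝ X (Icc (0:ℝ) 1) α ∧
        DifferentiableWithinAt ℝ Y (Icc (0:ℝ) 1) α) ∧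
      (∀ α ∈ Ioo (0:ℝ) 1, ∃ dX dY : ℝ, HasDerivAt X dX α ∧ HasDerivAt Y dY α ∧
        dX = I₀ / (X α ^ 2 - 1 + 1 / γ + ρ ^ 2 / 2) ∧
        dY = (1 / γ) * dX) ∧
      (∀ α ∈ Icc (0:ℝ) 1, X α ^ 2 - 1 + ρ ^ 2 / 2 + 1 / γ > 1 / γ ∧ (0:ℝ) < 1 / γ) :=
  stmt_7_general ε β γ ρ I₀ hβ hγ hI₀ hC2
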